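/- Let U ⊆ ℍ be open, f₀, f₁ : ℝ⁴ → ℝ be C¹, f : U → ℍ be given by f(x) = f₁(x₁,x₂,x₃,x₄)e₁ + ∑ᵢ₌₂⁴ xᵢ f₀(x₁,x₂,x₃,x₄)eᵢ, and c = ∑ₖcₖeₖ ∈ U. If there exists L ∈ ℍ such that { f(c+Δq) − f(c) + ∑ᵢ₌₂⁴ [ f→ᶜᵢ(c + (Δq)ᵢ·(e₁+e₂+e₃+e₄)) − f→ᶜᵢ(c) ] }·(Δq)⁻¹ tends to L as Δq → 0 along the punctured neighborhood filter 𝓝[≠] 0 in ℍ (where (Δq)ᵢ denotes the i-th real coordinate of Δq), then f is algebraic regular at c and L = ∂f/∂x₁(c). -/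

import Mathlib

open scoped Quaternion

noncomputable section

/-- The standard basis `e₁ = 1, e₂ = i, e₃ = j, e₄ = k` of the quaternions. -/
def e : Fin 4 → ℍ[ℝ] := ![1, ⟨0,1,0,0⟩, ⟨0,0,1,0⟩, ⟨0,0,0,1⟩]

/-- The real coordinates of a quaternion. -/
def toTuple (x : ℍ[ℝ]) : Fin 4 → ℝ := ![x.re, x.imI, x.imJ, x.imK]
/-- The `i`-th partial derivative of a function `g : ℝ⁴ → ℝ`. -/
def pd (g : (Fin 4 → ℝ) → ℝ) (i : Fin 4) (p : Fin 4 → ℝ) : ℝ :=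
  fderiv ℝ g p (Pi.single i 1)

/-- `f` is given on `U` by `f(x) = f₁(x₁,x₂,x₃,x₄)e₁ + ∑ₖ₌₂⁴ xₖ f₀(x₁,x₂,x₃,x₄)eₖ`. -/
def Represents (f : ℍ[ℝ] → ℍ[ℝ]) (U : Set ℍ[ℝ]) (f₀ f₁ : (Fin 4 → ℝ) → ℝ) : Prop :=
  ∀ x ∈ U, f x = f₁ (toTuple x) • e 0 + (x.imI * f₀ (toTuple x)) • e 1 +
    (x.imJ * f₀ (toTuple x)) • e 2 + (x.imK * f₀ (toTuple x)) • e 3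

/-- The generalized Cauchy–Riemann equations (ii) of algebraic regularity, at `p ∈ ℝ⁴`. -/
def RegularEqs (f₀ f₁ : (Fin 4 → ℝ) → ℝ) (p : Fin 4 → ℝ) : Prop :=
  pd f₁ 0 p = f₀ p + p 1 * pd f₀ 1 p + p 2 * pd f₀ 2 p + p 3 * pd f₀ 3 p ∧
  (∀ i : Fin 4, i ≠ 0 → pd f₁ i p = -(p i * pd f₀ 0 p)) ∧
  (∀ i j : Fin 4, i ≠ 0 → j ≠ 0 → i ≠ j → p i * pd f₀ j p = p j * pd f₀ i p)

/-- `f` is algebraic regular at `c ∈ U`. -/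
def AlgebraicRegularAt (f : ℍ[ℝ] → ℍ[ℝ]) (U : Set ℍ[ℝ]) (c : ℍ[ℝ]) : Prop :=
  ∃ f₀ f₁ : (Fin 4 → ℝ) → ℝ, ContDiff ℝ 1 f₀ ∧ ContDiff ℝ 1 f₁ ∧
    Represents f U f₀ f₁ ∧ RegularEqs f₀ f₁ (toTuple c)

/-- `f` is algebraic regular on `U`. -/
def AlgebraicRegularOn (f : ℍ[ℝ] → ℍ[ℝ]) (U : Set ℍ[ℝ]) : Prop :=
  ∀ c ∈ U, AlgebraicRegularAt f U c
/-- The function `f→ᶜ₄` (case `i = 2, j = 3` of (114)). -/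
def frFour (f₀ : (Fin 4 → ℝ) → ℝ) (c : ℍ[ℝ]) (x : ℍ[ℝ]) : ℍ[ℝ] :=
  (c.imI * f₀ ![c.re, x.imI, c.imJ, c.imK] + c.imJ * f₀ ![c.re, c.imI, x.imJ, c.imK]) • e 3 +
  ((-1 : ℝ) ^ (2 + 3) * c.imI * f₀ ![x.re, c.imI, c.imJ, c.imK] -
    c.imK * f₀ ![c.re, c.imI, x.imJ, c.imK]) • e 2 -
  ((-1 : ℝ) ^ (2 + 3) * c.imJ * f₀ ![x.re, c.imI, c.imJ, c.imK] +
    c.imK * f₀ ![c.re, x.imI, c.imJ, c.imK]) • e 1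

/-- The function `f→ᶜ₃` (case `i = 2, j = 4` of (114)). -/
def frThree (f₀ : (Fin 4 → ℝ) → ℝ) (c : ℍ[ℝ]) (x : ℍ[ℝ]) : ℍ[ℝ] :=
  (c.imI * f₀ ![c.re, x.imI, c.imJ, c.imK] + c.imK * f₀ ![c.re, c.imI, c.imJ, x.imK]) • e 2 +
  ((-1 : ℝ) ^ (2 + 4) * c.imI * f₀ ![x.re, c.imI, c.imJ, c.imK] -
    c.imJ * f₀ ![c.re, c.imI, c.imJ, x.imK]) • e 3 -
  ((-1 : ℝ) ^ (2 + 4) * c.imK * f₀ ![x.re, c.imI, c.imJ, c.imK] +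
    c.imJ * f₀ ![c.re, x.imI, c.imJ, c.imK]) • e 1

/-- The function `f→ᶜ₂` (case `i = 3, j = 4` of (114)). -/
def frTwo (f₀ : (Fin 4 → ℝ) → ℝ) (c : ℍ[ℝ]) (x : ℍ[ℝ]) : ℍ[ℝ] :=
  (c.imJ * f₀ ![c.re, c.imI, x.imJ, c.imK] + c.imK * f₀ ![c.re, c.imI, c.imJ, x.imK]) • e 1 +
  ((-1 : ℝ) ^ (3 + 4) * c.imJ * f₀ ![x.re, c.imI, c.imJ, c.imK] -
    c.imI * f₀ ![c.re, c.imI, c.imJ, x.imK]) • e 3 -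
  ((-1 : ℝ) ^ (3 + 4) * c.imK * f₀ ![x.re, c.imI, c.imJ, c.imK] +
    c.imI * f₀ ![c.re, c.imI, x.imJ, c.imK]) • e 2

/-- The right difference quotient of Proposition 4.1 (iii). -/
def rightQuot (f : ℍ[ℝ] → ℍ[ℝ]) (f₀ : (Fin 4 → ℝ) → ℝ) (c : ℍ[ℝ]) (Δq : ℍ[ℝ]) : ℍ[ℝ] :=
  (f (c + Δq) - f c +
      (frTwo f₀ c (c + Δq.imI • (e 0 + e 1 + e 2 + e 3)) - frTwo f₀ c c) +
      (frThree f₀ c (c + Δq.imJ • (e 0 + e 1 + e 2 + e 3)) - frThree f₀ c c) +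
      (frFour f₀ c (c + Δq.imK • (e 0 + e 1 + e 2 + e 3)) - frFour f₀ c c)) *
    (Δq)⁻¹

/-!
Restrict `Δq` to the coordinate axes, `Δq = t e_k`. Writing
`N(Δq) = f(c + Δq) + ∑ᵢ f→ᶜᵢ(c + (Δq)ᵢ (e₁ + e₂ + e₃ + e₄))`, the quotient is
`(N(t e_k) - N(0)) (t e_k)⁻¹`, and `N` is differentiable along each axis because `f₀, f₁` are `C¹`;
so `L e_k` is the derivative of `N` along `e_k`. On the real axis no `f→ᶜᵢ` moves, which gives
`L = ∂f/∂x₁(c)`. Along `e_k`, `k ≥ 2`, only `f→ᶜ_k` moves, and the four real components of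
`L e_k = ∂f/∂x_k(c) + (d/ds) f→ᶜ_k(c + s (e₁ + e₂ + e₃ + e₄))|_{s=0}` are exactly the
equations (ii).
-/

open Filter Topology

section DifferenceQuotient

variable {𝕜 A : Type*} [NontriviallyNormedField 𝕜] [NormedDivisionRing A] [NormedAlgebra 𝕜 A]

theorem tendsto_smul_const_nhdsNE {u : A} (hu : u ≠ 0) :
    Tendsto (fun t : 𝕜 => t • u) (𝓝[≠] 0) (𝓝[≠] 0) := by
  refine tendsto_nhdsWithin_iff.2 ⟨?_, ?_⟩
  · exact ((continuous_id.smul continuous_const).tendsto' 0 0 (zero_smul 𝕜 u)).mono_left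
      nhdsWithin_le_nhds
  · filter_upwards [self_mem_nhdsWithin] with t ht using smul_ne_zero ht hu

theorem mul_eq_of_tendsto_sub_mul_inv {N : A → A} {D L u : A} (hu : u ≠ 0)
    (hN : HasLineDerivAt 𝕜 N D 0 u)
    (hL : Tendsto (fun q => (N q - N 0) * q⁻¹) (𝓝[≠] 0) (𝓝 L)) : L * u = D := by
  have h₁ : Tendsto (fun t : 𝕜 => (N (t • u) - N 0) * (t • u)⁻¹) (𝓝[≠] 0) (𝓝 L) :=
    hL.comp (tendsto_smul_const_nhdsNE hu)
  have h₂ : Tendsto (fun t : 𝕜 => (N (t • u) - N 0) * (t • u)⁻¹) (𝓝[≠] 0) (𝓝 (D * u⁻¹)) := by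
    refine (hN.tendsto_slope_zero.mul_const u⁻¹).congr fun t => ?_
    rw [zero_add, smul_inv₀, mul_smul_comm, smul_mul_assoc]
  rw [tendsto_nhds_unique h₁ h₂, inv_mul_cancel_right₀ hu]

lemma HasDerivAt.comp_mul_const_zero {E : Type*} [NormedAddCommGroup E] [NormedSpace ℝ E]
    {F : ℝ → E} {F' : E} (hF : HasDerivAt F F' 0) (a : ℝ) :
    HasDerivAt (fun t => F (t * a)) (a • F') 0 := by
  rw [← zero_mul a] at hF
  exact hF.scomp 0 (hasDerivAt_mul_const a)

end DifferenceQuotient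

local notation "𝐝" => (e 0 + e 1 + e 2 + e 3)

lemma e_zero : e 0 = 1 := rfl

@[simp] lemma re_e (k : Fin 4) : (e k).re = Pi.single (M := fun _ => ℝ) k 1 0 := by
  fin_cases k <;> rfl

@[simp] lemma imI_e (k : Fin 4) : (e k).imI = Pi.single (M := fun _ => ℝ) k 1 1 := by
  fin_cases k <;> rfl

@[simp] lemma imJ_e (k : Fin 4) : (e k).imJ = Pi.single (M := fun _ => ℝ) k 1 2 := by
  fin_cases k <;> rfl

@[simp] lemma imK_e (k : Fin 4) : (e k).imK = Pi.single (M := fun _ => ℝ) k 1 3 := by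
  fin_cases k <;> rfl

def toTupleCLM : ℍ[ℝ] →L[ℝ] (Fin 4 → ℝ) :=
  LinearMap.toContinuousLinearMap (QuaternionAlgebra.linearEquivTuple (-1 : ℝ) 0 (-1)).toLinearMap

lemma coe_toTupleCLM : ⇑toTupleCLM = toTuple := rfl

lemma toTuple_e (k : Fin 4) : toTuple (e k) = Pi.single k 1 := by
  fin_cases k <;> ext j <;> fin_cases j <;> rfl

lemma e_ne_zero (k : Fin 4) : e k ≠ 0 := by
  intro h
  have h' := congrArg toTupleCLM h
  rw [map_zero, coe_toTupleCLM, toTuple_e] at h'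
  simp at h'

section Shift

variable (c : ℍ[ℝ]) (s : ℝ)

lemma vec_re_add_smul :
    ![(c + s • 𝐝).re, c.imI, c.imJ, c.imK] = toTuple c + s • Pi.single 0 1 := by
  ext j; fin_cases j <;> simp [toTuple]

lemma vec_imI_add_smul :
    ![c.re, (c + s • 𝐝).imI, c.imJ, c.imK] = toTuple c + s • Pi.single 1 1 := by
  ext j; fin_cases j <;> simp [toTuple]

lemma vec_imJ_add_smul :
    ![c.re, c.imI, (c + s • 𝐝).imJ, c.imK] = toTuple c + s • Pi.single 2 1 := by
  ext j; fin_cases j <;> simp [toTuple]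

lemma vec_imK_add_smul :
    ![c.re, c.imI, c.imJ, (c + s • 𝐝).imK] = toTuple c + s • Pi.single 3 1 := by
  ext j; fin_cases j <;> simp [toTuple]

end Shift

section

variable {f₀ f₁ : (Fin 4 → ℝ) → ℝ}

lemma regularEqs_of {p : Fin 4 → ℝ}
    (h₀ : pd f₁ 0 p = f₀ p + p 1 * pd f₀ 1 p + p 2 * pd f₀ 2 p + p 3 * pd f₀ 3 p)
    (h₁ : pd f₁ 1 p = -(p 1 * pd f₀ 0 p)) (h₂ : pd f₁ 2 p = -(p 2 * pd f₀ 0 p))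
    (h₃ : pd f₁ 3 p = -(p 3 * pd f₀ 0 p)) (h₁₂ : p 1 * pd f₀ 2 p = p 2 * pd f₀ 1 p)
    (h₁₃ : p 1 * pd f₀ 3 p = p 3 * pd f₀ 1 p) (h₂₃ : p 2 * pd f₀ 3 p = p 3 * pd f₀ 2 p) :
    RegularEqs f₀ f₁ p := by
  refine ⟨h₀, fun i hi => ?_, fun i j hi hj hij => ?_⟩
  · fin_cases i <;> simp_all
  · fin_cases i <;> fin_cases j <;> simp_all [eq_comm]

def reprMap (f₀ f₁ : (Fin 4 → ℝ) → ℝ) (x : Fin 4 → ℝ) : ℍ[ℝ] :=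
  f₁ x • e 0 + (x 1 * f₀ x) • e 1 + (x 2 * f₀ x) • e 2 + (x 3 * f₀ x) • e 3

lemma differentiableAt_reprMap {p : Fin 4 → ℝ} (hf₀ : DifferentiableAt ℝ f₀ p)
    (hf₁ : DifferentiableAt ℝ f₁ p) : DifferentiableAt ℝ (reprMap f₀ f₁) p := by
  unfold reprMap
  fun_prop

lemma fderiv_reprMap_apply {p : Fin 4 → ℝ} (hf₀ : DifferentiableAt ℝ f₀ p)
    (hf₁ : DifferentiableAt ℝ f₁ p) (w : Fin 4 → ℝ) :
    fderiv ℝ (reprMap f₀ f₁) p w = fderiv ℝ f₁ p w • e 0 +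
      (w 1 * f₀ p + p 1 * fderiv ℝ f₀ p w) • e 1 + (w 2 * f₀ p + p 2 * fderiv ℝ f₀ p w) • e 2 +
      (w 3 * f₀ p + p 3 * fderiv ℝ f₀ p w) • e 3 := by
  have h₀ := hf₀.hasFDerivAt
  have h : HasFDerivAt (reprMap f₀ f₁) _ p := (((hf₁.hasFDerivAt.smul_const (e 0)).add
    (((hasFDerivAt_apply 1 p).mul h₀).smul_const (e 1))).add
    (((hasFDerivAt_apply 2 p).mul h₀).smul_const (e 2))).add
    (((hasFDerivAt_apply 3 p).mul h₀).smul_const (e 3))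
  rw [h.fderiv]
  simp only [add_apply, ContinuousLinearMap.smulRight_apply, smul_apply,
    ContinuousLinearMap.proj_apply, smul_eq_mul]
  module

lemma Represents.hasFDerivAt {f : ℍ[ℝ] → ℍ[ℝ]} {U : Set ℍ[ℝ]} {c : ℍ[ℝ]}
    (hf : Represents f U f₀ f₁) (hU : IsOpen U) (hc : c ∈ U)
    (hf₀ : DifferentiableAt ℝ f₀ (toTuple c)) (hf₁ : DifferentiableAt ℝ f₁ (toTuple c)) :
    HasFDerivAt f ((fderiv ℝ (reprMap f₀ f₁) (toTuple c)).comp toTupleCLM) c := by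
  have hrepr : reprMap f₀ f₁ ∘ toTupleCLM =ᶠ[𝓝 c] f := by
    filter_upwards [hU.mem_nhds hc] with x hx
    exact (hf x hx).symm
  exact (((differentiableAt_reprMap hf₀ hf₁).hasFDerivAt).comp c
    toTupleCLM.hasFDerivAt).congr_of_eventuallyEq hrepr.symm

lemma hasDerivAt_comp_add_smul_single {p : Fin 4 → ℝ} (hf₀ : DifferentiableAt ℝ f₀ p)
    (k : Fin 4) : HasDerivAt (fun s : ℝ => f₀ (p + s • Pi.single k 1)) (pd f₀ k p) 0 :=
  hf₀.hasFDerivAt.hasLineDerivAt _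

variable {c : ℍ[ℝ]}

lemma hasDerivAt_frTwo (hf₀ : DifferentiableAt ℝ f₀ (toTuple c)) :
    HasDerivAt (fun s : ℝ => frTwo f₀ c (c + s • 𝐝))
      ((c.imJ * pd f₀ 2 (toTuple c) + c.imK * pd f₀ 3 (toTuple c)) • e 1 +
        ((-1 : ℝ) ^ (3 + 4) * c.imJ * pd f₀ 0 (toTuple c) - c.imI * pd f₀ 3 (toTuple c)) • e 3 -
        ((-1 : ℝ) ^ (3 + 4) * c.imK * pd f₀ 0 (toTuple c) + c.imI * pd f₀ 2 (toTuple c)) • e 2)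
      0 := by
  have h := hasDerivAt_comp_add_smul_single hf₀
  simp only [frTwo, vec_re_add_smul, vec_imJ_add_smul, vec_imK_add_smul]
  exact ((((h 2).const_mul _).add ((h 3).const_mul _)).smul_const _).add
    ((((h 0).const_mul _).sub ((h 3).const_mul _)).smul_const _) |>.sub
    ((((h 0).const_mul _).add ((h 2).const_mul _)).smul_const _)

lemma hasDerivAt_frThree (hf₀ : DifferentiableAt ℝ f₀ (toTuple c)) :
    HasDerivAt (fun s : ℝ => frThree f₀ c (c + s • 𝐝))
      ((c.imI * pd f₀ 1 (toTuple c) + c.imK * pd f₀ 3 (toTuple c)) • e 2 +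
        ((-1 : ℝ) ^ (2 + 4) * c.imI * pd f₀ 0 (toTuple c) - c.imJ * pd f₀ 3 (toTuple c)) • e 3 -
        ((-1 : ℝ) ^ (2 + 4) * c.imK * pd f₀ 0 (toTuple c) + c.imJ * pd f₀ 1 (toTuple c)) • e 1)
      0 := by
  have h := hasDerivAt_comp_add_smul_single hf₀
  simp only [frThree, vec_re_add_smul, vec_imI_add_smul, vec_imK_add_smul]
  exact ((((h 1).const_mul _).add ((h 3).const_mul _)).smul_const _).add
    ((((h 0).const_mul _).sub ((h 3).const_mul _)).smul_const _) |>.sub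
    ((((h 0).const_mul _).add ((h 1).const_mul _)).smul_const _)

lemma hasDerivAt_frFour (hf₀ : DifferentiableAt ℝ f₀ (toTuple c)) :
    HasDerivAt (fun s : ℝ => frFour f₀ c (c + s • 𝐝))
      ((c.imI * pd f₀ 1 (toTuple c) + c.imJ * pd f₀ 2 (toTuple c)) • e 3 +
        ((-1 : ℝ) ^ (2 + 3) * c.imI * pd f₀ 0 (toTuple c) - c.imK * pd f₀ 2 (toTuple c)) • e 2 -
        ((-1 : ℝ) ^ (2 + 3) * c.imJ * pd f₀ 0 (toTuple c) + c.imK * pd f₀ 1 (toTuple c)) • e 1)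
      0 := by
  have h := hasDerivAt_comp_add_smul_single hf₀
  simp only [frFour, vec_re_add_smul, vec_imI_add_smul, vec_imJ_add_smul]
  exact ((((h 1).const_mul _).add ((h 2).const_mul _)).smul_const _).add
    ((((h 0).const_mul _).sub ((h 2).const_mul _)).smul_const _) |>.sub
    ((((h 0).const_mul _).add ((h 1).const_mul _)).smul_const _)

def augmented (f : ℍ[ℝ] → ℍ[ℝ]) (f₀ : (Fin 4 → ℝ) → ℝ) (c Δq : ℍ[ℝ]) : ℍ[ℝ] :=
  f (c + Δq) + frTwo f₀ c (c + Δq.imI • 𝐝) + frThree f₀ c (c + Δq.imJ • 𝐝) +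
    frFour f₀ c (c + Δq.imK • 𝐝)

lemma rightQuot_eq_augmented (f : ℍ[ℝ] → ℍ[ℝ]) (f₀ : (Fin 4 → ℝ) → ℝ) (c Δq : ℍ[ℝ]) :
    rightQuot f f₀ c Δq = (augmented f f₀ c Δq - augmented f f₀ c 0) * Δq⁻¹ := by
  simp only [rightQuot, augmented, add_zero, Quaternion.imI_zero, Quaternion.imJ_zero,
    Quaternion.imK_zero, zero_smul]
  congr 1
  abel

lemma hasLineDerivAt_augmented {f : ℍ[ℝ] → ℍ[ℝ]} {f' : ℍ[ℝ] →L[ℝ] ℍ[ℝ]} {F₂ F₃ F₄ : ℍ[ℝ]}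
    (hf : HasFDerivAt f f' c)
    (h₂ : HasDerivAt (fun s : ℝ => frTwo f₀ c (c + s • 𝐝)) F₂ 0)
    (h₃ : HasDerivAt (fun s : ℝ => frThree f₀ c (c + s • 𝐝)) F₃ 0)
    (h₄ : HasDerivAt (fun s : ℝ => frFour f₀ c (c + s • 𝐝)) F₄ 0) (v : ℍ[ℝ]) :
    HasLineDerivAt ℝ (augmented f f₀ c) (f' v + v.imI • F₂ + v.imJ • F₃ + v.imK • F₄) 0 v := by
  have h := (((hf.hasLineDerivAt v).add (h₂.comp_mul_const_zero v.imI)).add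
    (h₃.comp_mul_const_zero v.imJ)).add (h₄.comp_mul_const_zero v.imK)
  unfold HasLineDerivAt
  convert h using 2 with t
  simp [augmented, Quaternion.imI_smul, Quaternion.imJ_smul, Quaternion.imK_smul]

open Quaternion in
lemma regularEqs_of_hasLineDerivAt_augmented (hf₀ : DifferentiableAt ℝ f₀ (toTuple c))
    (hf₁ : DifferentiableAt ℝ f₁ (toTuple c)) {f : ℍ[ℝ] → ℍ[ℝ]} {L : ℍ[ℝ]}
    (hf : HasFDerivAt f ((fderiv ℝ (reprMap f₀ f₁) (toTuple c)).comp toTupleCLM) c)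
    (hL : ∀ k, HasLineDerivAt ℝ (augmented f f₀ c) (L * e k) 0 (e k)) :
    RegularEqs f₀ f₁ (toTuple c) := by
  have h k := (hL k).unique (hasLineDerivAt_augmented hf (hasDerivAt_frTwo hf₀)
    (hasDerivAt_frThree hf₀) (hasDerivAt_frFour hf₀) (e k))
  simp only [ContinuousLinearMap.comp_apply, coe_toTupleCLM, toTuple_e,
    fderiv_reprMap_apply hf₀ hf₁, ← pd.eq_1, Quaternion.ext_iff] at h
  have h₀ := h 0
  have h₁ := h 1
  have h₂ := h 2
  have h₃ := h 3
  simp [re_mul, imI_mul, imJ_mul, imK_mul, re_smul, imI_smul, imJ_smul, imK_smul, toTuple]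
    at h₀ h₁ h₂ h₃
  obtain ⟨h0r, h0i, h0j, h0k⟩ := h₀
  obtain ⟨h1r, h1i, h1j, h1k⟩ := h₁
  obtain ⟨h2r, -, -, h2k⟩ := h₂
  obtain ⟨h3r, -, -, -⟩ := h₃
  apply regularEqs_of <;> simp [toTuple] <;> linarith

end

/-- if the right difference quotient tends to some `L ∈ ℍ` as `Δq → 0`,
then `f` is algebraic regular at `c` and `L = ∂f/∂x₁(c)`. -/
theorem algebraicRegularAt_of_tendsto_rightQuot (U : Set ℍ[ℝ]) (hU : IsOpen U)
    (f : ℍ[ℝ] → ℍ[ℝ]) (f₀ f₁ : (Fin 4 → ℝ) → ℝ)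
    (hf₀ : ContDiff ℝ 1 f₀) (hf₁ : ContDiff ℝ 1 f₁)
    (hf : Represents f U f₀ f₁) (c : ℍ[ℝ]) (hc : c ∈ U) (L : ℍ[ℝ])
    (hL : Filter.Tendsto (rightQuot f f₀ c) (nhdsWithin 0 {q : ℍ[ℝ] | q ≠ 0}) (nhds L)) :
    AlgebraicRegularAt f U c ∧ L = fderiv ℝ f c (e 0) := by
  have hd₀ := hf₀.differentiable one_ne_zero (toTuple c)
  have hd₁ := hf₁.differentiable one_ne_zero (toTuple c)
  have hf' := hf.hasFDerivAt hU hc hd₀ hd₁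
  have hN := hasLineDerivAt_augmented hf' (hasDerivAt_frTwo hd₀) (hasDerivAt_frThree hd₀)
    (hasDerivAt_frFour hd₀)
  have hquot :
      Tendsto (fun q => (augmented f f₀ c q - augmented f f₀ c 0) * q⁻¹) (𝓝[≠] 0) (𝓝 L) := by
    rw [show rightQuot f f₀ c = _ from funext (rightQuot_eq_augmented f f₀ c)] at hL
    exact hL
  have key k : HasLineDerivAt ℝ (augmented f f₀ c) (L * e k) 0 (e k) := by
    rw [mul_eq_of_tendsto_sub_mul_inv (e_ne_zero k) (hN (e k)) hquot]
    exact hN (e k)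
  refine ⟨⟨f₀, f₁, hf₀, hf₁, hf, regularEqs_of_hasLineDerivAt_augmented hd₀ hd₁ hf' key⟩, ?_⟩
  rw [hf'.fderiv]
  simpa [e_zero] using (key 0).unique (hN (e 0))
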